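/- With the setup of the failure-risk recursion, define modified kernels T̃_k(s, s') := T_k(s, s') · (1 - r(s)) and the occupation measures x_k(s) by x_0(s_0) = 1, x_0(s) = 0 for s ≠ s_0, and x_{k+1}(s') = ∑_s x_k(s) · T̃_k(s, s'). Then the execution risk from the initial state equals Er(0, s_0) = r(s_0) + ∑_{k=0}^{h-1} ∑_{s} ∑_{s'} r(s') · x_k(s) · T̃_k(s, s'). -/

import Mathlib

/-! The occupation measures `x_k` propagate forward through the survival kernel `T̃`, while
`Er` propagates backward through it: `Er k s = r s + ∑ s', T̃_k(s, s') Er (k+1) s'`.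
Pairing the two, `∑ s, x_k(s) Er(k, s) = ∑ s, x_k(s) r(s) + ∑ s, x_{k+1}(s) Er(k+1, s)`, and
telescoping from `k = 0` (where the pairing is `Er(0, s_0)`) to `k = h` (where `Er = r`)
writes the execution risk as the total risk collected along the occupation measures. -/

open Finset

section OccupationMeasure

variable {S : Type*} [Fintype S] {P : ℕ → S → S → ℝ} {x : ℕ → S → ℝ}

theorem sum_occupation_succ_mul
    (hx : ∀ k s', x (k + 1) s' = ∑ s, x k s * P k s s') (k : ℕ) (f : S → ℝ) :
    ∑ s', x (k + 1) s' * f s' = ∑ s, x k s * ∑ s', P k s s' * f s' := by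
  simp only [hx, sum_mul, mul_sum]
  rw [sum_comm]
  exact sum_congr rfl fun _ _ => sum_congr rfl fun _ _ => mul_assoc _ _ _

theorem sum_occupation_mul_value_zero {r : S → ℝ} {V : ℕ → S → ℝ} {h : ℕ}
    (hx : ∀ k s', x (k + 1) s' = ∑ s, x k s * P k s s')
    (hVh : ∀ s, V h s = r s)
    (hV : ∀ k < h, ∀ s, V k s = r s + ∑ s', P k s s' * V (k + 1) s') :
    ∑ s, x 0 s * V 0 s = ∑ k ∈ range (h + 1), ∑ s, x k s * r s := by
  have telescope : ∀ m ≤ h,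
      ∑ s, x 0 s * V 0 s = ∑ k ∈ range m, ∑ s, x k s * r s + ∑ s, x m s * V m s := by
    intro m
    induction m with
    | zero => simp
    | succ m ih =>
      intro hm
      have step : ∑ s, x m s * V m s = ∑ s, x m s * r s + ∑ s, x (m + 1) s * V (m + 1) s := by
        simp only [sum_occupation_succ_mul hx, hV m hm, mul_add, sum_add_distrib]
      rw [ih (Nat.le_of_succ_le hm), step, sum_range_succ, add_assoc]
  rw [telescope h le_rfl, sum_range_succ]
  simp only [hVh]

end OccupationMeasure

theorem stmt_6_general {S : Type*} [Fintype S] [DecidableEq S] (h : ℕ)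
    (s0 : S) (T : ℕ → S → S → ℝ) (r : S → ℝ)
    (Er : ℕ → S → ℝ)
    (hErh : ∀ s, Er h s = r s)
    (hEr : ∀ k < h, ∀ s : S,
      Er k s = r s + (1 - r s) * ∑ s', T k s s' * Er (k + 1) s')
    (x : ℕ → S → ℝ)
    (hx0 : ∀ s, x 0 s = if s = s0 then 1 else 0)
    (hx : ∀ k s', x (k + 1) s' = ∑ s, x k s * (T k s s' * (1 - r s))) :
    Er 0 s0 = r s0 +
      ∑ k ∈ Finset.range h, ∑ s, ∑ s',
        r s' * x k s * (T k s s' * (1 - r s)) := by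
  have hEr' : ∀ k < h, ∀ s,
      Er k s = r s + ∑ s', T k s s' * (1 - r s) * Er (k + 1) s' := by
    intro k hk s
    rw [hEr k hk s, mul_sum]
    exact congrArg _ (sum_congr rfl fun _ _ => by ring)
  have pairing_zero : ∀ f : S → ℝ, ∑ s, x 0 s * f s = f s0 := by simp [hx0]
  calc Er 0 s0 = ∑ s, x 0 s * Er 0 s := (pairing_zero _).symm
    _ = ∑ k ∈ range (h + 1), ∑ s, x k s * r s := sum_occupation_mul_value_zero hx hErh hEr'
    _ = r s0 + ∑ k ∈ range h, ∑ s, x (k + 1) s * r s := by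
      rw [sum_range_succ', pairing_zero, add_comm]
    _ = _ := by
      simp only [sum_occupation_succ_mul hx, mul_sum]
      exact congrArg _ (sum_congr rfl fun _ _ => sum_congr rfl fun _ _ =>
        sum_congr rfl fun _ _ => by ring)

theorem stmt_6 {S : Type*} [Fintype S] [DecidableEq S] (h : ℕ) (hh : 0 < h)
    (s0 : S) (T : ℕ → S → S → ℝ) (r : S → ℝ)
    (hr : ∀ s, 0 ≤ r s ∧ r s ≤ 1)
    (hT0 : ∀ k s s', 0 ≤ T k s s') (hT1 : ∀ k s, ∑ s', T k s s' = 1)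
    (Er : ℕ → S → ℝ)
    (hErh : ∀ s, Er h s = r s)
    (hEr : ∀ k < h, ∀ s : S,
      Er k s = r s + (1 - r s) * ∑ s', T k s s' * Er (k + 1) s')
    (x : ℕ → S → ℝ)
    (hx0 : ∀ s, x 0 s = if s = s0 then 1 else 0)
    (hx : ∀ k s', x (k + 1) s' = ∑ s, x k s * (T k s s' * (1 - r s))) :
    Er 0 s0 = r s0 +
      ∑ k ∈ Finset.range h, ∑ s, ∑ s',
        r s' * x k s * (T k s s' * (1 - r s)) :=
  stmt_6_general h s0 T r Er hErh hEr x hx0 hx
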